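/- arXiv:2004.03371 — 4 statements merged into one kernel-verified Lean document; each statement's English description precedes it below -/
import Mathlib

section
/- Let ρ > 1 be a real number. Then the function K₁ : ℝ × ℝ → ℝ defined by K₁(u,v) = (1/(36·u·(1−u)) − 1/36)·v² is convex on the set (0, 1/ρ) × ℝ, i.e. on {(u,v) : 0 < u < 1/ρ}. -/
/-!
On `0 < u < 1` we have `K₁(u, v) = v² / g(u)` with `g(u) = 36 (1 / (u² - u + 1) - 1)`, which is
positive there. The reciprocal of `u² - u + 1` is concave on `[0, 1]`, so `g` is concave, and
`(x, v) ↦ v² / x` is jointly convex and antitone in `x > 0`; hence `v² / g(u)` is convex.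
Since `ρ > 1`, the strip `0 < u < 1 / ρ` lies in `0 < u < 1`.
-/

open Set

lemma mul_add_mul_sq_div_le {a b v₁ v₂ x₁ x₂ : ℝ} (ha : 0 ≤ a) (hb : 0 ≤ b)
    (hx₁ : 0 < x₁) (hx₂ : 0 < x₂) :
    (a * v₁ + b * v₂) ^ 2 / (a * x₁ + b * x₂) ≤ a * (v₁ ^ 2 / x₁) + b * (v₂ ^ 2 / x₂) := by
  have hrhs : 0 ≤ a * (v₁ ^ 2 / x₁) + b * (v₂ ^ 2 / x₂) := by positivity
  rcases (by positivity : 0 ≤ a * x₁ + b * x₂).eq_or_lt with hx | hx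
  · rwa [← hx, div_zero]
  obtain ⟨t₁, rfl⟩ : ∃ t, v₁ = t * x₁ := ⟨v₁ / x₁, (div_mul_cancel₀ _ hx₁.ne').symm⟩
  obtain ⟨t₂, rfl⟩ : ∃ t, v₂ = t * x₂ := ⟨v₂ / x₂, (div_mul_cancel₀ _ hx₂.ne').symm⟩
  have e₁ : (t₁ * x₁) ^ 2 / x₁ = t₁ ^ 2 * x₁ := by field_simp
  have e₂ : (t₂ * x₂) ^ 2 / x₂ = t₂ ^ 2 * x₂ := by field_simp
  rw [e₁, e₂, div_le_iff₀ hx]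
  -- the gap is `a * b * x₁ * x₂ * (t₁ - t₂) ^ 2`
  nlinarith [mul_nonneg (mul_nonneg ha hb) (mul_nonneg hx₁.le hx₂.le), sq_nonneg (t₁ - t₂)]

theorem ConcaveOn.convexOn_sq_div {E : Type*} [AddCommGroup E] [Module ℝ E] {s : Set E}
    {g : E → ℝ} (hg : ConcaveOn ℝ s g) (hg₀ : ∀ x ∈ s, 0 < g x) :
    ConvexOn ℝ (s ×ˢ univ) (fun p : E × ℝ => p.2 ^ 2 / g p.1) := by
  refine ⟨hg.1.prod convex_univ, ?_⟩
  rintro ⟨x₁, v₁⟩ ⟨hx₁, -⟩ ⟨x₂, v₂⟩ ⟨hx₂, -⟩ a b ha hb hab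
  simp only [Prod.smul_mk, Prod.mk_add_mk, smul_eq_mul]
  have hmix : 0 < a * g x₁ + b * g x₂ := by
    rcases ha.eq_or_lt with rfl | ha'
    · simpa [show b = 1 by linarith] using hg₀ x₂ hx₂
    · have := hg₀ x₁ hx₁; have := hg₀ x₂ hx₂; positivity
  calc (a * v₁ + b * v₂) ^ 2 / g (a • x₁ + b • x₂)
      ≤ (a * v₁ + b * v₂) ^ 2 / (a * g x₁ + b * g x₂) :=
        div_le_div_of_nonneg_left (sq_nonneg _) hmix (hg.2 hx₁ hx₂ ha hb hab)
    _ ≤ a * (v₁ ^ 2 / g x₁) + b * (v₂ ^ 2 / g x₂) :=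
        mul_add_mul_sq_div_le ha hb (hg₀ x₁ hx₁) (hg₀ x₂ hx₂)

lemma concaveOn_inv_sq_sub_add_one : ConcaveOn ℝ (Icc 0 1) (fun u : ℝ => (u ^ 2 - u + 1)⁻¹) := by
  refine ⟨convex_Icc 0 1, ?_⟩
  rintro u₁ ⟨h₁, h₁'⟩ u₂ ⟨h₂, h₂'⟩ a b ha hb hab
  obtain rfl : b = 1 - a := by linarith
  simp only [smul_eq_mul]
  set w := a * u₁ + (1 - a) * u₂
  have hq : ∀ u : ℝ, 0 < u ^ 2 - u + 1 := fun u => by nlinarith [sq_nonneg (2 * u - 1)]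
  have hs₁ : (u₁ + u₂ - 1) ^ 2 ≤ u₁ ^ 2 - u₁ + 1 := by nlinarith
  have hs₂ : (u₁ + u₂ - 1) ^ 2 ≤ u₂ ^ 2 - u₂ + 1 := by nlinarith
  -- `q(w) = a q(u₁) + (1 - a) q(u₂) - a (1 - a) (u₁ - u₂)²` for the quadratic `q`
  have key : (u₁ ^ 2 - u₁ + 1) * (u₂ ^ 2 - u₂ + 1)
      - (a * (u₂ ^ 2 - u₂ + 1) + (1 - a) * (u₁ ^ 2 - u₁ + 1)) * (w ^ 2 - w + 1)
      = a * (1 - a) * (u₁ - u₂) ^ 2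
        * (a * (u₂ ^ 2 - u₂ + 1) + (1 - a) * (u₁ ^ 2 - u₁ + 1) - (u₁ + u₂ - 1) ^ 2) := by
    ring
  have hs : (u₁ + u₂ - 1) ^ 2 ≤ a * (u₂ ^ 2 - u₂ + 1) + (1 - a) * (u₁ ^ 2 - u₁ + 1) := by
    nlinarith
  have hnn : 0 ≤ a * (1 - a) * (u₁ - u₂) ^ 2
      * (a * (u₂ ^ 2 - u₂ + 1) + (1 - a) * (u₁ ^ 2 - u₁ + 1) - (u₁ + u₂ - 1) ^ 2) := by
    have : 0 ≤ 1 - a := by linarith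
    have := sub_nonneg.mpr hs
    positivity
  rw [← div_eq_mul_inv, ← div_eq_mul_inv, div_add_div _ _ (hq u₁).ne' (hq u₂).ne',
    ← one_div, div_le_div_iff₀ (mul_pos (hq u₁) (hq u₂)) (hq w)]
  linarith

lemma K1_eq_sq_div {u : ℝ} (h₀ : 0 < u) (h₁ : u < 1) (v : ℝ) :
    v ^ 2 / (36 * ((u ^ 2 - u + 1)⁻¹ - 1)) = (1 / (36 * u * (1 - u)) - 1 / 36) * v ^ 2 := by
  have : 1 - u ≠ 0 := by linarith
  have hq : u ^ 2 - u + 1 ≠ 0 := by nlinarith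
  have : (u ^ 2 - u + 1)⁻¹ - 1 = u * (1 - u) / (u ^ 2 - u + 1) := by
    rw [eq_div_iff hq, sub_mul, inv_mul_cancel₀ hq]
    ring
  rw [this]
  field_simp
  ring

lemma K1_convexOn_Ioo :
    ConvexOn ℝ (Ioo 0 1 ×ˢ univ)
      (fun p : ℝ × ℝ => (1 / (36 * p.1 * (1 - p.1)) - 1 / 36) * p.2 ^ 2) := by
  have hg : ConcaveOn ℝ (Ioo 0 1) (fun u : ℝ => 36 * ((u ^ 2 - u + 1)⁻¹ - 1)) :=
    ((concaveOn_inv_sq_sub_add_one.subset Ioo_subset_Icc_self (convex_Ioo 0 1)).add_const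
      (-1 : ℝ)).smul (by norm_num : (0 : ℝ) ≤ 36)
  have hg₀ : ∀ u ∈ Ioo (0 : ℝ) 1, 0 < 36 * ((u ^ 2 - u + 1)⁻¹ - 1) := by
    rintro u ⟨h₀, h₁⟩
    have : 1 < (u ^ 2 - u + 1)⁻¹ := one_lt_inv₀ (by nlinarith) |>.mpr (by nlinarith)
    linarith
  refine (hg.convexOn_sq_div hg₀).congr ?_
  rintro ⟨u, v⟩ ⟨⟨h₀, h₁⟩, -⟩
  exact K1_eq_sq_div h₀ h₁ v

theorem K1_convexOn (ρ : ℝ) (hρ : 1 < ρ) :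
    ConvexOn ℝ {p : ℝ × ℝ | 0 < p.1 ∧ p.1 < 1 / ρ}
      (fun p : ℝ × ℝ => (1 / (36 * p.1 * (1 - p.1)) - 1 / 36) * p.2 ^ 2) := by
  have hset : {p : ℝ × ℝ | 0 < p.1 ∧ p.1 < 1 / ρ} = Ioo 0 (1 / ρ) ×ˢ univ := by
    ext p; simp
  have hρ' : 1 / ρ ≤ 1 := (div_le_one (by linarith)).mpr hρ.le
  rw [hset]
  exact K1_convexOn_Ioo.subset (prod_mono (Ioo_subset_Ioo_right hρ') subset_rfl)
    ((convex_Ioo 0 (1 / ρ)).prod convex_univ)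
end

section
/- Let E be a real inner product space and define Q : E × E → ℝ by Q(u,v) := (1/2)·‖u‖² − 2·⟪u, v⟫ + (5/2)·‖v‖². Then for all v₀, v₁, v₂ ∈ E, ⟪(3/2)·v₂ − 2·v₁ + (1/2)·v₀, v₂⟫ = (1/2)·(Q(v₁, v₂) − Q(v₀, v₁)) + (1/4)·‖v₂ − 2v₁ + v₀‖². -/
open scoped RealInnerProductSpace

theorem bdf2_G_norm_telescoping_identity {E : Type*} [NormedAddCommGroup E]
    [InnerProductSpace ℝ E] (v₀ v₁ v₂ : E) :
    ⟪(3 / 2 : ℝ) • v₂ - (2 : ℝ) • v₁ + (1 / 2 : ℝ) • v₀, v₂⟫ =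
      (1 / 2) * (((1 / 2) * ‖v₁‖ ^ 2 - 2 * ⟪v₁, v₂⟫ + (5 / 2) * ‖v₂‖ ^ 2)
          - ((1 / 2) * ‖v₀‖ ^ 2 - 2 * ⟪v₀, v₁⟫ + (5 / 2) * ‖v₁‖ ^ 2))
        + (1 / 4) * ‖v₂ - (2 : ℝ) • v₁ + v₀‖ ^ 2 := by
  simp only [← real_inner_self_eq_norm_sq, inner_add_left, inner_add_right, inner_sub_left,
    inner_sub_right, real_inner_smul_left, real_inner_smul_right, real_inner_comm v₀ v₁,
    real_inner_comm v₀ v₂, real_inner_comm v₁ v₂]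
  ring
end

section
/- Fix an integer N ≥ 1 and real numbers h > 0, Δt > 0, τ > 0, N₁ > 0, α > 0, β > 0, χ > 0 and ρ > 1, and suppose A ≥ χ²ρ². Let φⁿ⁺¹, φⁿ, φⁿ⁻¹ : ZMod N × ZMod N → ℝ be periodic grid functions with values in (0, 1/ρ) pointwise, with Σ_{(i,j)} φⁿ(i,j) = Σ_{(i,j)} φⁿ⁻¹(i,j), satisfying the scheme: for all (i,j), 3·φⁿ⁺¹(i,j) − 4·φⁿ(i,j) + φⁿ⁻¹(i,j) = 2Δt·Δ_h μ (i,j), where μ(i,j) := (1/τ + 1/N₁)·ln(φⁿ⁺¹(i,j)) − ρ·ln(1 − ρ·φⁿ⁺¹(i,j)) + κ'(φⁿ⁺¹(i,j))·(a_x((D_xφⁿ⁺¹)²)(i,j) + a_y((D_yφⁿ⁺¹)²)(i,j)) − 2·d_x((A_x κ(φⁿ⁺¹))·(D_xφⁿ⁺¹))(i,j) − 2·d_y((A_y κ(φⁿ⁺¹))·(D_yφⁿ⁺¹))(i,j) − 2χρ·(2φⁿ(i,j) − φⁿ⁻¹(i,j)) − A·Δt·Δ_h(φⁿ⁺¹ −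 φⁿ)(i,j). Let ψ_a, ψ_b be periodic grid functions with Σ_{(i,j)} ψ_a(i,j) = Σ_{(i,j)} ψ_b(i,j) = 0, −Δ_h ψ_a = φⁿ⁺¹ − φⁿ and −Δ_h ψ_b = φⁿ − φⁿ⁻¹. Define the discrete energy F(φ) := h² Σ_{(i,j)} [S(φ(i,j)) + H(φ(i,j)) + κ(φ(i,j))·(a_x((D_xφ)²)(i,j) + a_y((D_yφ)²)(i,j))] and the modified energies E⁺ := F(φⁿ⁺¹) + (1/(4Δt))·h² Σ_{(i,j)} ψ_a(i,j)·(φⁿ⁺¹ − φⁿ)(i,j) + χρ·h² Σ_{(i,j)} (φⁿ⁺¹ − φⁿ)(i,j)², E⁰ := F(φⁿ) + (1/(4Δt))·h² Σ_{(i,j)} ψ_b(i,j)·(φⁿ − φⁿ⁻¹)(i,j) + χρ·h² Σ_{(i,j)} (φⁿ − φⁿ⁻¹)(i,j)². Then E⁺ + (1/Δt)·(1 − χ²ρ²/A)·h² Σ_{(i,j)} ψ_a(i,j)·(φⁿ⁺¹ − φⁿ)(i,j) ≤ E⁰. -/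
/-- Forward difference in the x-direction. -/
noncomputable def Dx {N : ℕ} (h : ℝ) (ν : ZMod N × ZMod N → ℝ) : ZMod N × ZMod N → ℝ :=
  fun p => (ν (p.1 + 1, p.2) - ν p) / h

/-- Forward difference in the y-direction. -/
noncomputable def Dy {N : ℕ} (h : ℝ) (ν : ZMod N × ZMod N → ℝ) : ZMod N × ZMod N → ℝ :=
  fun p => (ν (p.1, p.2 + 1) - ν p) / h

/-- Backward difference in the x-direction. -/
noncomputable def dx {N : ℕ} (h : ℝ) (f : ZMod N × ZMod N → ℝ) : ZMod N × ZMod N → ℝ :=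
  fun p => (f p - f (p.1 - 1, p.2)) / h

/-- Backward difference in the y-direction. -/
noncomputable def dy {N : ℕ} (h : ℝ) (f : ZMod N × ZMod N → ℝ) : ZMod N × ZMod N → ℝ :=
  fun p => (f p - f (p.1, p.2 - 1)) / h

/-- Forward average in the x-direction. -/
noncomputable def Ax {N : ℕ} (ν : ZMod N × ZMod N → ℝ) : ZMod N × ZMod N → ℝ :=
  fun p => (ν (p.1 + 1, p.2) + ν p) / 2

/-- Forward average in the y-direction. -/
noncomputable def Ay {N : ℕ} (ν : ZMod N × ZMod N → ℝ) : ZMod N × ZMod N → ℝ :=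
  fun p => (ν (p.1, p.2 + 1) + ν p) / 2

/-- Backward average in the x-direction. -/
noncomputable def ax {N : ℕ} (w : ZMod N × ZMod N → ℝ) : ZMod N × ZMod N → ℝ :=
  fun p => (w p + w (p.1 - 1, p.2)) / 2

/-- Backward average in the y-direction. -/
noncomputable def ay {N : ℕ} (w : ZMod N × ZMod N → ℝ) : ZMod N × ZMod N → ℝ :=
  fun p => (w p + w (p.1, p.2 - 1)) / 2

/-- The standard five-point discrete Laplacian on periodic grid functions. -/
noncomputable def lapH {N : ℕ} (h : ℝ) (ν : ZMod N × ZMod N → ℝ) : ZMod N × ZMod N → ℝ :=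
  fun p => (ν (p.1 + 1, p.2) + ν (p.1 - 1, p.2) + ν (p.1, p.2 + 1) + ν (p.1, p.2 - 1)
    - 4 * ν p) / h ^ 2

/-- The logarithmic Flory--Huggins part of the energy density. -/
noncomputable def Sfun (τ N₁ α β ρ : ℝ) (s : ℝ) : ℝ :=
  s / τ * Real.log (α * s / τ) + s / N₁ * Real.log (β * s / τ)
    + (1 - ρ * s) * Real.log (1 - ρ * s)

/-- The concave part of the energy density. -/
noncomputable def Hfun (χ ρ : ℝ) (s : ℝ) : ℝ := χ * s * (1 - ρ * s)

/-- The deGennes diffusive coefficient. -/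
noncomputable def kap (s : ℝ) : ℝ := 1 / (36 * s * (1 - s))

/-- The derivative of the deGennes diffusive coefficient. -/
noncomputable def kap' (s : ℝ) : ℝ := (2 * s - 1) / (36 * s ^ 2 * (1 - s) ^ 2)

/-- The discrete energy functional. -/
noncomputable def Fdisc {N : ℕ} [NeZero N] (h τ N₁ α β χ ρ : ℝ) (φ : ZMod N × ZMod N → ℝ) : ℝ :=
  h ^ 2 * ∑ p : ZMod N × ZMod N,
    (Sfun τ N₁ α β ρ (φ p) + Hfun χ ρ (φ p)
      + kap (φ p) * (ax (fun q => (Dx h φ q) ^ 2) p + ay (fun q => (Dy h φ q) ^ 2) p))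

/-- The discrete chemical potential of the second-order BDF scheme. -/
noncomputable def mu {N : ℕ} (h dt A τ N₁ χ ρ : ℝ)
    (φ φn φnm1 : ZMod N × ZMod N → ℝ) : ZMod N × ZMod N → ℝ :=
  fun p =>
    (1 / τ + 1 / N₁) * Real.log (φ p) - ρ * Real.log (1 - ρ * φ p)
      + kap' (φ p) * (ax (fun q => (Dx h φ q) ^ 2) p + ay (fun q => (Dy h φ q) ^ 2) p)
      - 2 * dx h (fun q => Ax (fun r => kap (φ r)) q * Dx h φ q) p
      - 2 * dy h (fun q => Ay (fun r => kap (φ r)) q * Dy h φ q) p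
      - 2 * χ * ρ * (2 * φn p - φnm1 p)
      - A * dt * lapH h (fun q => φ q - φn q) p

/-!
Convex–concave splitting in the discrete `H⁻¹` gradient flow. Testing the scheme against
`ψa = (-Δ_h)⁻¹ (φⁿ⁺¹ - φⁿ)` turns the BDF2 difference quotient into `H⁻¹` norms, which telescope
after Cauchy–Schwarz on the cross term `⟨ψa, ψb⟩`. The convex parts of the energy (the logarithmic
terms and the deGennes term `κ(φ)|∇_h φ|²`, jointly convex in `(φ, ∇_h φ)`) are treated implicitly
and bounded by their tangent planes at `φⁿ⁺¹`; the concave part, treated through the extrapolation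
`2φⁿ - φⁿ⁻¹`, costs `χρ‖φⁿ⁺¹ - φⁿ‖² + χρ‖φⁿ - φⁿ⁻¹‖²`, and Young's inequality against the
Douglas–Dupont term `AΔt‖∇_h(φⁿ⁺¹ - φⁿ)‖²` pays for the extra `χρ‖φⁿ⁺¹ - φⁿ‖²` with a fraction
`χ²ρ²/A` of `‖φⁿ⁺¹ - φⁿ‖²_{-1,h}`. Mass conservation removes the affine parts of the energy density.
-/

section PointwiseConvexity

open Real

lemma mul_log_mul_sub_le {c x y : ℝ} (hc : c ≠ 0) (hx : 0 < x) (hy : 0 < y) :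
    x * log (c * x) - y * log (c * y) ≤ (log (c * x) + 1) * (x - y) := by
  have hlog : log (c * x) - log (c * y) = log (x / y) := by
    rw [log_mul hc hx.ne', log_mul hc hy.ne', log_div hx.ne' hy.ne']
    ring
  have := mul_le_mul_of_nonneg_left (log_le_sub_one_of_pos (div_pos hx hy)) hy.le
  rw [← hlog, mul_sub_one, mul_div_cancel₀ x hy.ne'] at this
  linarith

/-- The derivative of `Sfun` up to an additive constant, which disappears against
mass-conserving increments. -/
noncomputable def logPotential (τ N₁ ρ s : ℝ) : ℝ :=
  (1 / τ + 1 / N₁) * log s - ρ * log (1 - ρ * s)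

lemma Sfun_sub_le {τ N₁ α β ρ x y : ℝ} (hτ : 0 < τ) (hN₁ : 0 < N₁) (hα : α ≠ 0) (hβ : β ≠ 0)
    (hx : 0 < x) (hρx : ρ * x < 1) (hy : 0 < y) (hρy : ρ * y < 1) :
    Sfun τ N₁ α β ρ x - Sfun τ N₁ α β ρ y ≤ (logPotential τ N₁ ρ x
      + ((log (α / τ) + 1) / τ + (log (β / τ) + 1) / N₁ - ρ)) * (x - y) := by
  have hατ : α / τ ≠ 0 := div_ne_zero hα hτ.ne'
  have hβτ : β / τ ≠ 0 := div_ne_zero hβ hτ.ne'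
  have hSα := mul_le_mul_of_nonneg_left (mul_log_mul_sub_le hατ hx hy) (one_div_pos.2 hτ).le
  have hSβ := mul_le_mul_of_nonneg_left (mul_log_mul_sub_le hβτ hx hy) (one_div_pos.2 hN₁).le
  have hSρ := mul_log_mul_sub_le one_ne_zero (sub_pos.2 hρx) (sub_pos.2 hρy)
  simp only [one_mul, log_mul hατ hx.ne', log_mul hβτ hx.ne', log_mul hατ hy.ne',
    log_mul hβτ hy.ne'] at hSα hSβ hSρ
  simp only [Sfun, logPotential, mul_div_right_comm α, mul_div_right_comm β,
    log_mul hατ hx.ne', log_mul hβτ hx.ne', log_mul hατ hy.ne', log_mul hβτ hy.ne']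
  simp only [div_eq_mul_inv, one_mul] at hSα hSβ ⊢
  linarith

lemma Hfun_sub_le {χ ρ : ℝ} (hχρ : 0 ≤ χ * ρ) (x y z : ℝ) :
    Hfun χ ρ x - Hfun χ ρ y ≤ (χ - 2 * χ * ρ * (2 * y - z)) * (x - y)
      + χ * ρ * (x - y) ^ 2 + χ * ρ * (y - z) ^ 2 := by
  have hgap : (χ - 2 * χ * ρ * (2 * y - z)) * (x - y) + χ * ρ * (x - y) ^ 2
      + χ * ρ * (y - z) ^ 2 - (Hfun χ ρ x - Hfun χ ρ y)
      = χ * ρ * ((x - y) ^ 2 + (x - 2 * y + z) ^ 2) := by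
    simp only [Hfun]
    ring
  have : 0 ≤ χ * ρ * ((x - y) ^ 2 + (x - 2 * y + z) ^ 2) := by positivity
  linarith

/-- Tangent-plane inequality for the convex function `(s, t) ↦ κ(s) t²` on `(0, 1) × ℝ`. -/
lemma kap_mul_sq_sub_le {s₁ s₂ : ℝ} (hs₁ : 0 < s₁) (hs₁' : s₁ < 1) (hs₂ : 0 < s₂)
    (hs₂' : s₂ < 1) (t₁ t₂ : ℝ) :
    kap s₁ * t₁ ^ 2 - kap s₂ * t₂ ^ 2
      ≤ kap' s₁ * (s₁ - s₂) * t₁ ^ 2 + 2 * (kap s₁ * t₁) * (t₁ - t₂) := by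
  have h₁ : 0 < 1 - s₁ := sub_pos.2 hs₁'
  have h₂ : 0 < 1 - s₂ := sub_pos.2 hs₂'
  have hgap : kap' s₁ * (s₁ - s₂) * t₁ ^ 2 + 2 * (kap s₁ * t₁) * (t₁ - t₂)
      - (kap s₁ * t₁ ^ 2 - kap s₂ * t₂ ^ 2)
      = ((36 * s₂ * (1 - s₂) * t₁ - 36 * s₁ * (1 - s₁) * t₂) ^ 2
          + 36 * (s₁ - s₂) ^ 2 * (36 * s₂ * (1 - s₂)) * t₁ ^ 2)
        / ((36 * s₁ * (1 - s₁)) ^ 2 * (36 * s₂ * (1 - s₂))) := by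
    simp only [kap, kap']
    field_simp
    ring
  have : 0 ≤ ((36 * s₂ * (1 - s₂) * t₁ - 36 * s₁ * (1 - s₁) * t₂) ^ 2
          + 36 * (s₁ - s₂) ^ 2 * (36 * s₂ * (1 - s₂)) * t₁ ^ 2)
        / ((36 * s₁ * (1 - s₁)) ^ 2 * (36 * s₂ * (1 - s₂))) := by positivity
  linarith

end PointwiseConvexity

section PeriodicGrid

open Finset

variable {N : ℕ} {h dt A τ N₁ α β χ ρ : ℝ}

local notation "𝕋" => ZMod N × ZMod N

lemma lapH_eq_dx_Dx_add_dy_Dy (hh : h ≠ 0) (f : 𝕋 → ℝ) (p : 𝕋) :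
    lapH h f p = dx h (Dx h f) p + dy h (Dy h f) p := by
  simp only [lapH, dx, dy, Dx, Dy, sub_add_cancel]
  field_simp
  ring

variable [NeZero N]

lemma sum_mul_shift_fst (f g : 𝕋 → ℝ) :
    ∑ p : 𝕋, f (p.1 + 1, p.2) * g p = ∑ p : 𝕋, f p * g (p.1 - 1, p.2) :=
  Fintype.sum_equiv (Equiv.addRight ((1, 0) : 𝕋)) _ _ (fun _ => by simp [Prod.add_def])

lemma sum_mul_shift_snd (f g : 𝕋 → ℝ) :
    ∑ p : 𝕋, f (p.1, p.2 + 1) * g p = ∑ p : 𝕋, f p * g (p.1, p.2 - 1) :=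
  Fintype.sum_equiv (Equiv.addRight ((0, 1) : 𝕋)) _ _ (fun _ => by simp [Prod.add_def])

lemma sum_mul_dx (f g : 𝕋 → ℝ) :
    ∑ p, f p * dx h g p = -∑ p, Dx h f p * g p := by
  have := sum_mul_shift_fst f g
  simp only [dx, Dx, mul_div_assoc', div_mul_eq_mul_div, ← sum_div, mul_sub, sub_mul,
    sum_sub_distrib, this]
  ring

lemma sum_mul_dy (f g : 𝕋 → ℝ) :
    ∑ p, f p * dy h g p = -∑ p, Dy h f p * g p := by
  have := sum_mul_shift_snd f g
  simp only [dy, Dy, mul_div_assoc', div_mul_eq_mul_div, ← sum_div, mul_sub, sub_mul,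
    sum_sub_distrib, this]
  ring

lemma sum_mul_ax (f g : 𝕋 → ℝ) : ∑ p, f p * ax g p = ∑ p, Ax f p * g p := by
  have := sum_mul_shift_fst f g
  simp only [ax, Ax, mul_div_assoc', div_mul_eq_mul_div, ← sum_div, mul_add, add_mul,
    sum_add_distrib, this]
  ring

lemma sum_mul_ay (f g : 𝕋 → ℝ) : ∑ p, f p * ay g p = ∑ p, Ay f p * g p := by
  have := sum_mul_shift_snd f g
  simp only [ay, Ay, mul_div_assoc', div_mul_eq_mul_div, ← sum_div, mul_add, add_mul,
    sum_add_distrib, this]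
  ring

noncomputable def gradInner (h : ℝ) (f g : 𝕋 → ℝ) : ℝ :=
  ∑ p, (Dx h f p * Dx h g p + Dy h f p * Dy h g p)

lemma gradInner_comm (f g : 𝕋 → ℝ) : gradInner h f g = gradInner h g f := by
  simp only [gradInner, mul_comm]

lemma two_mul_mul_gradInner_le (a b : ℝ) (f g : 𝕋 → ℝ) :
    2 * (a * b) * gradInner h f g ≤ a ^ 2 * gradInner h f f + b ^ 2 * gradInner h g g := by
  simp only [gradInner, mul_sum, ← sum_add_distrib]
  refine sum_le_sum fun p _ => ?_
  nlinarith [sq_nonneg (a * Dx h f p - b * Dx h g p), sq_nonneg (a * Dy h f p - b * Dy h g p)]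

lemma sum_mul_lapH (hh : h ≠ 0) (f g : 𝕋 → ℝ) :
    ∑ p, g p * lapH h f p = -gradInner h g f := by
  simp only [lapH_eq_dx_Dx_add_dy_Dy hh, mul_add, sum_add_distrib, sum_mul_dx, sum_mul_dy, gradInner]
  ring

lemma sum_mul_lapH_comm (hh : h ≠ 0) (f g : 𝕋 → ℝ) :
    ∑ p, g p * lapH h f p = ∑ p, f p * lapH h g p := by
  rw [sum_mul_lapH hh, sum_mul_lapH hh, gradInner_comm]

lemma sum_lapH (hh : h ≠ 0) (f : 𝕋 → ℝ) : ∑ p, lapH h f p = 0 := by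
  simpa [gradInner, Dx, Dy] using sum_mul_lapH hh f 1

lemma sum_mul_eq_gradInner_of_neg_lapH (hh : h ≠ 0) {ψ e : 𝕋 → ℝ}
    (hψ : ∀ p, -lapH h ψ p = e p) (g : 𝕋 → ℝ) :
    ∑ p, g p * e p = gradInner h g ψ := by
  simp only [← hψ, mul_neg, sum_neg_distrib, sum_mul_lapH hh, neg_neg]

noncomputable def gradEnergy (h : ℝ) (φ : 𝕋 → ℝ) : ℝ :=
  ∑ p, kap (φ p) * (ax (fun q => (Dx h φ q) ^ 2) p + ay (fun q => (Dy h φ q) ^ 2) p)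

/-- The variational derivative of `gradEnergy`, as it enters `mu`. -/
noncomputable def gradPotential (h : ℝ) (φ : 𝕋 → ℝ) (p : 𝕋) : ℝ :=
  kap' (φ p) * (ax (fun q => (Dx h φ q) ^ 2) p + ay (fun q => (Dy h φ q) ^ 2) p)
    - 2 * dx h (fun q => Ax (fun r => kap (φ r)) q * Dx h φ q) p
    - 2 * dy h (fun q => Ay (fun r => kap (φ r)) q * Dy h φ q) p

lemma gradEnergy_eq (φ : 𝕋 → ℝ) :
    gradEnergy h φ = ∑ p, (Ax (fun r => kap (φ r)) p * Dx h φ p ^ 2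
      + Ay (fun r => kap (φ r)) p * Dy h φ p ^ 2) := by
  simp only [gradEnergy, mul_add, sum_add_distrib, sum_mul_ax, sum_mul_ay]

lemma sum_gradPotential_mul (φ w : 𝕋 → ℝ) :
    ∑ p, gradPotential h φ p * w p
      = ∑ p, (Ax (fun r => kap' (φ r) * w r) p * Dx h φ p ^ 2
        + Ay (fun r => kap' (φ r) * w r) p * Dy h φ p ^ 2
        + 2 * (Ax (fun r => kap (φ r)) p * Dx h φ p) * Dx h w p
        + 2 * (Ay (fun r => kap (φ r)) p * Dy h φ p) * Dy h w p) := by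
  have hsplit : ∑ p, gradPotential h φ p * w p
      = ∑ p, (kap' (φ p) * w p) * ax (fun q => (Dx h φ q) ^ 2) p
        + ∑ p, (kap' (φ p) * w p) * ay (fun q => (Dy h φ q) ^ 2) p
        - 2 * ∑ p, w p * dx h (fun q => Ax (fun r => kap (φ r)) q * Dx h φ q) p
        - 2 * ∑ p, w p * dy h (fun q => Ay (fun r => kap (φ r)) q * Dy h φ q) p := by
    simp only [mul_sum, ← sum_add_distrib, ← sum_sub_distrib, gradPotential]
    exact sum_congr rfl fun p _ => by ring
  rw [hsplit, sum_mul_ax, sum_mul_ay, sum_mul_dx, sum_mul_dy]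
  simp only [mul_neg, sub_neg_eq_add, mul_sum, ← sum_add_distrib]
  exact sum_congr rfl fun p _ => by ring

lemma gradEnergy_sub_le {a b : 𝕋 → ℝ} (ha : ∀ p, 0 < a p ∧ a p < 1)
    (hb : ∀ p, 0 < b p ∧ b p < 1) :
    gradEnergy h a - gradEnergy h b ≤ ∑ p, gradPotential h a p * (a p - b p) := by
  rw [gradEnergy_eq, gradEnergy_eq, sum_gradPotential_mul, ← sum_sub_distrib]
  refine sum_le_sum fun p _ => ?_
  have hx₁ := kap_mul_sq_sub_le (ha (p.1 + 1, p.2)).1 (ha (p.1 + 1, p.2)).2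
    (hb (p.1 + 1, p.2)).1 (hb (p.1 + 1, p.2)).2 (Dx h a p) (Dx h b p)
  have hx₀ := kap_mul_sq_sub_le (ha p).1 (ha p).2 (hb p).1 (hb p).2 (Dx h a p) (Dx h b p)
  have hy₁ := kap_mul_sq_sub_le (ha (p.1, p.2 + 1)).1 (ha (p.1, p.2 + 1)).2
    (hb (p.1, p.2 + 1)).1 (hb (p.1, p.2 + 1)).2 (Dy h a p) (Dy h b p)
  have hy₀ := kap_mul_sq_sub_le (ha p).1 (ha p).2 (hb p).1 (hb p).2 (Dy h a p) (Dy h b p)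
  have hDx : Dx h (fun q => a q - b q) p = Dx h a p - Dx h b p := by simp only [Dx]; ring
  have hDy : Dy h (fun q => a q - b q) p = Dy h a p - Dy h b p := by simp only [Dy]; ring
  rw [hDx, hDy]
  simp only [Ax, Ay]
  linarith

lemma Fdisc_eq (φ : 𝕋 → ℝ) :
    Fdisc h τ N₁ α β χ ρ φ
      = h ^ 2 * (∑ p, Sfun τ N₁ α β ρ (φ p) + ∑ p, Hfun χ ρ (φ p) + gradEnergy h φ) := by
  simp only [Fdisc, gradEnergy, sum_add_distrib]

lemma sum_mu_mul_sub (hh : h ≠ 0) (a b c : 𝕋 → ℝ) :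
    ∑ p, mu h dt A τ N₁ χ ρ a b c p * (a p - b p)
      = ∑ p, logPotential τ N₁ ρ (a p) * (a p - b p) + ∑ p, gradPotential h a p * (a p - b p)
        - 2 * χ * ρ * ∑ p, (2 * b p - c p) * (a p - b p)
        + A * dt * gradInner h (fun q => a q - b q) (fun q => a q - b q) := by
  have hDD := sum_mul_lapH hh (fun q => a q - b q) (fun q => a q - b q)
  simp only [mu, logPotential, gradPotential, mul_sum, ← sum_add_distrib, ← sum_sub_distrib,
    ← neg_eq_iff_eq_neg.2 hDD, ← sum_neg_distrib]
  exact sum_congr rfl fun p _ => by ring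

lemma sum_Sfun_sub_le (hτ : 0 < τ) (hN₁ : 0 < N₁) (hα : α ≠ 0) (hβ : β ≠ 0) {a b : 𝕋 → ℝ}
    (ha : ∀ p, 0 < a p ∧ ρ * a p < 1) (hb : ∀ p, 0 < b p ∧ ρ * b p < 1)
    (hmass : ∑ p, (a p - b p) = 0) :
    ∑ p, Sfun τ N₁ α β ρ (a p) - ∑ p, Sfun τ N₁ α β ρ (b p)
      ≤ ∑ p, logPotential τ N₁ ρ (a p) * (a p - b p) := by
  rw [← sum_sub_distrib]
  refine (sum_le_sum fun p _ =>
    Sfun_sub_le hτ hN₁ hα hβ (ha p).1 (ha p).2 (hb p).1 (hb p).2).trans_eq ?_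
  simp only [add_mul, sum_add_distrib, ← mul_sum, hmass, mul_zero, add_zero]

lemma sum_Hfun_sub_le (hχρ : 0 ≤ χ * ρ) {a b : 𝕋 → ℝ} (c : 𝕋 → ℝ)
    (hmass : ∑ p, (a p - b p) = 0) :
    ∑ p, Hfun χ ρ (a p) - ∑ p, Hfun χ ρ (b p)
      ≤ -(2 * χ * ρ * ∑ p, (2 * b p - c p) * (a p - b p))
        + χ * ρ * ∑ p, (a p - b p) ^ 2 + χ * ρ * ∑ p, (b p - c p) ^ 2 := by
  rw [← sum_sub_distrib]
  refine (sum_le_sum fun p _ => Hfun_sub_le hχρ (a p) (b p) (c p)).trans_eq ?_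
  simp only [sub_mul, sum_add_distrib, sum_sub_distrib, ← mul_sum, hmass, mul_assoc]
  ring

lemma Fdisc_sub_le (hh : h ≠ 0) (hτ : 0 < τ) (hN₁ : 0 < N₁) (hα : α ≠ 0) (hβ : β ≠ 0)
    (hχρ : 0 ≤ χ * ρ) {a b : 𝕋 → ℝ} (ha : ∀ p, 0 < a p ∧ a p < 1 ∧ ρ * a p < 1)
    (hb : ∀ p, 0 < b p ∧ b p < 1 ∧ ρ * b p < 1) (c : 𝕋 → ℝ)
    (hmass : ∑ p, (a p - b p) = 0) :
    Fdisc h τ N₁ α β χ ρ a - Fdisc h τ N₁ α β χ ρ b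
      ≤ h ^ 2 * (∑ p, mu h dt A τ N₁ χ ρ a b c p * (a p - b p)
        - A * dt * gradInner h (fun q => a q - b q) (fun q => a q - b q)
        + χ * ρ * ∑ p, (a p - b p) ^ 2 + χ * ρ * ∑ p, (b p - c p) ^ 2) := by
  have hS := sum_Sfun_sub_le hτ hN₁ hα hβ (fun p => ⟨(ha p).1, (ha p).2.2⟩)
    (fun p => ⟨(hb p).1, (hb p).2.2⟩) hmass
  have hH := sum_Hfun_sub_le hχρ c hmass
  have hK := gradEnergy_sub_le (h := h) (fun p => ⟨(ha p).1, (ha p).2.1⟩)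
    (fun p => ⟨(hb p).1, (hb p).2.1⟩)
  rw [Fdisc_eq, Fdisc_eq, ← mul_sub, sum_mu_mul_sub hh]
  gcongr
  linarith

lemma sum_sub_eq_zero_of_bdf2 (hh : h ≠ 0) {a b c f : 𝕋 → ℝ} {k : ℝ}
    (hscheme : ∀ p, 3 * a p - 4 * b p + c p = k * lapH h f p)
    (hmass : ∑ p, b p = ∑ p, c p) :
    ∑ p, (a p - b p) = 0 := by
  have hsum := sum_congr rfl fun p (_ : p ∈ univ) => hscheme p
  rw [← mul_sum, sum_lapH hh, mul_zero, sum_add_distrib, sum_sub_distrib, ← mul_sum,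
    ← mul_sum] at hsum
  rw [sum_sub_distrib]
  linarith

lemma two_mul_sum_mul_sub_of_bdf2 (hh : h ≠ 0) {a b c f ψ : 𝕋 → ℝ}
    (hscheme : ∀ p, 3 * a p - 4 * b p + c p = 2 * dt * lapH h f p)
    (hψ : ∀ p, -lapH h ψ p = a p - b p) :
    2 * dt * ∑ p, f p * (a p - b p) = ∑ p, ψ p * (b p - c p) - 3 * ∑ p, ψ p * (a p - b p) := by
  have hpair : ∑ p, ψ p * (3 * a p - 4 * b p + c p) = -(2 * dt * ∑ p, f p * (a p - b p)) := by
    simp only [hscheme, ← hψ, mul_left_comm _ (2 * dt), ← mul_sum, sum_mul_lapH_comm hh f ψ,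
      mul_neg, sum_neg_distrib, neg_neg]
  have hsplit : ∑ p, ψ p * (3 * a p - 4 * b p + c p)
      = 3 * ∑ p, ψ p * (a p - b p) - ∑ p, ψ p * (b p - c p) := by
    rw [mul_sum, ← sum_sub_distrib]
    exact sum_congr rfl fun p _ => by ring
  linarith

/-- The `H⁻¹` part of the estimate: pairing the scheme with `ψa` and splitting the cross term
`⟨ψa, ψb⟩` by Cauchy–Schwarz, while Young's inequality trades `2γ‖a - b‖²` for the
Douglas–Dupont term and a fraction `γ²/A` of `‖a - b‖²_{-1,h}`. -/
lemma sum_mul_sub_le_of_bdf2 (hh : h ≠ 0) (hdt : 0 < dt) (hA : 0 < A) (γ : ℝ)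
    {a b c f ψa ψb : 𝕋 → ℝ} (hscheme : ∀ p, 3 * a p - 4 * b p + c p = 2 * dt * lapH h f p)
    (hψa : ∀ p, -lapH h ψa p = a p - b p) (hψb : ∀ p, -lapH h ψb p = b p - c p) :
    ∑ p, f p * (a p - b p) - A * dt * gradInner h (fun q => a q - b q) (fun q => a q - b q)
      + 2 * γ * ∑ p, (a p - b p) ^ 2
      ≤ 1 / (4 * dt) * (∑ p, ψb p * (b p - c p) - ∑ p, ψa p * (a p - b p))
        - 1 / dt * (1 - γ ^ 2 / A) * ∑ p, ψa p * (a p - b p) := by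
  have hM := two_mul_sum_mul_sub_of_bdf2 hh hscheme hψa
  have hE := sum_mul_eq_gradInner_of_neg_lapH hh hψa (fun q => a q - b q)
  simp only [← sq] at hE
  rw [sum_mul_eq_gradInner_of_neg_lapH hh hψb ψa,
    sum_mul_eq_gradInner_of_neg_lapH hh hψa ψa] at hM
  rw [hE, sum_mul_eq_gradInner_of_neg_lapH hh hψb ψb, sum_mul_eq_gradInner_of_neg_lapH hh hψa ψa]
  have hCS := two_mul_mul_gradInner_le (h := h) 1 1 ψa ψb
  have hY := two_mul_mul_gradInner_le (h := h) (A * dt) γ (fun q => a q - b q) ψa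
  have hR : 1 / (4 * dt) * (gradInner h ψb ψb - gradInner h ψa ψa)
        - 1 / dt * (1 - γ ^ 2 / A) * gradInner h ψa ψa
      = (A * (gradInner h ψb ψb - gradInner h ψa ψa)
        - 4 * (A - γ ^ 2) * gradInner h ψa ψa) / (4 * dt * A) := by
    field_simp
  rw [hR, le_div_iff₀ (by positivity)]
  linear_combination (2 * A) * hM + A * hCS + 4 * hY

end PeriodicGrid

theorem unconditional_energy_stability_general (N : ℕ) [NeZero N]
    (h dt A τ N₁ α β χ ρ : ℝ) (hh : 0 < h) (hdt : 0 < dt)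
    (hτ : 0 < τ) (hN₁ : 0 < N₁) (hα : 0 < α) (hβ : 0 < β) (hχ : 0 < χ) (hρ : 1 < ρ)
    (hA : A ≥ χ ^ 2 * ρ ^ 2)
    (φnp1 φn φnm1 : ZMod N × ZMod N → ℝ)
    (hφnp1 : ∀ p, 0 < φnp1 p ∧ φnp1 p < 1 / ρ)
    (hφn : ∀ p, 0 < φn p ∧ φn p < 1 / ρ)
    (hmass : ∑ p : ZMod N × ZMod N, φn p = ∑ p : ZMod N × ZMod N, φnm1 p)
    (hscheme : ∀ p : ZMod N × ZMod N,
      3 * φnp1 p - 4 * φn p + φnm1 p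
        = 2 * dt * lapH h (mu h dt A τ N₁ χ ρ φnp1 φn φnm1) p)
    (ψa ψb : ZMod N × ZMod N → ℝ)
    (hψa : ∀ p : ZMod N × ZMod N, -lapH h ψa p = φnp1 p - φn p)
    (hψb : ∀ p : ZMod N × ZMod N, -lapH h ψb p = φn p - φnm1 p) :
    Fdisc h τ N₁ α β χ ρ φnp1
        + (1 / (4 * dt)) * (h ^ 2 * ∑ p : ZMod N × ZMod N, ψa p * (φnp1 p - φn p))
        + χ * ρ * (h ^ 2 * ∑ p : ZMod N × ZMod N, (φnp1 p - φn p) ^ 2)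
        + (1 / dt) * (1 - χ ^ 2 * ρ ^ 2 / A)
            * (h ^ 2 * ∑ p : ZMod N × ZMod N, ψa p * (φnp1 p - φn p))
      ≤ Fdisc h τ N₁ α β χ ρ φn
          + (1 / (4 * dt)) * (h ^ 2 * ∑ p : ZMod N × ZMod N, ψb p * (φn p - φnm1 p))
          + χ * ρ * (h ^ 2 * ∑ p : ZMod N × ZMod N, (φn p - φnm1 p) ^ 2) := by
  have hρ₀ : 0 < ρ := one_pos.trans hρ
  have hA₀ : 0 < A := lt_of_lt_of_le (by positivity) hA
  have hbounds : ∀ s : ℝ, 0 < s ∧ s < 1 / ρ → 0 < s ∧ s < 1 ∧ ρ * s < 1 := fun s ⟨hs₀, hs⟩ =>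
    ⟨hs₀, hs.trans ((div_lt_one hρ₀).2 hρ), by rwa [lt_div_iff₀ hρ₀, mul_comm] at hs⟩
  have hmass' := sum_sub_eq_zero_of_bdf2 hh.ne' hscheme hmass
  have hF := Fdisc_sub_le (dt := dt) (A := A) hh.ne' hτ hN₁ hα.ne' hβ.ne' (mul_pos hχ hρ₀).le
    (fun p => hbounds _ (hφnp1 p)) (fun p => hbounds _ (hφn p)) φnm1 hmass'
  have hH := sum_mul_sub_le_of_bdf2 hh.ne' hdt hA₀ (χ * ρ) hscheme hψa hψb
  rw [mul_pow] at hH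
  linarith [mul_le_mul_of_nonneg_left hH (sq_nonneg h)]

theorem unconditional_energy_stability (N : ℕ) [NeZero N] (hN : 1 ≤ N)
    (h dt A τ N₁ α β χ ρ : ℝ) (hh : 0 < h) (hdt : 0 < dt)
    (hτ : 0 < τ) (hN₁ : 0 < N₁) (hα : 0 < α) (hβ : 0 < β) (hχ : 0 < χ) (hρ : 1 < ρ)
    (hA : A ≥ χ ^ 2 * ρ ^ 2)
    (φnp1 φn φnm1 : ZMod N × ZMod N → ℝ)
    (hφnp1 : ∀ p, 0 < φnp1 p ∧ φnp1 p < 1 / ρ)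
    (hφn : ∀ p, 0 < φn p ∧ φn p < 1 / ρ)
    (hφnm1 : ∀ p, 0 < φnm1 p ∧ φnm1 p < 1 / ρ)
    (hmass : ∑ p : ZMod N × ZMod N, φn p = ∑ p : ZMod N × ZMod N, φnm1 p)
    (hscheme : ∀ p : ZMod N × ZMod N,
      3 * φnp1 p - 4 * φn p + φnm1 p
        = 2 * dt * lapH h (mu h dt A τ N₁ χ ρ φnp1 φn φnm1) p)
    (ψa ψb : ZMod N × ZMod N → ℝ)
    (hψa0 : ∑ p : ZMod N × ZMod N, ψa p = 0)
    (hψb0 : ∑ p : ZMod N × ZMod N, ψb p = 0)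
    (hψa : ∀ p : ZMod N × ZMod N, -lapH h ψa p = φnp1 p - φn p)
    (hψb : ∀ p : ZMod N × ZMod N, -lapH h ψb p = φn p - φnm1 p) :
    Fdisc h τ N₁ α β χ ρ φnp1
        + (1 / (4 * dt)) * (h ^ 2 * ∑ p : ZMod N × ZMod N, ψa p * (φnp1 p - φn p))
        + χ * ρ * (h ^ 2 * ∑ p : ZMod N × ZMod N, (φnp1 p - φn p) ^ 2)
        + (1 / dt) * (1 - χ ^ 2 * ρ ^ 2 / A)
            * (h ^ 2 * ∑ p : ZMod N × ZMod N, ψa p * (φnp1 p - φn p))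
      ≤ Fdisc h τ N₁ α β χ ρ φn
          + (1 / (4 * dt)) * (h ^ 2 * ∑ p : ZMod N × ZMod N, ψb p * (φn p - φnm1 p))
          + χ * ρ * (h ^ 2 * ∑ p : ZMod N × ZMod N, (φn p - φnm1 p) ^ 2) :=
  unconditional_energy_stability_general N h dt A τ N₁ α β χ ρ hh hdt hτ hN₁ hα hβ hχ hρ hA φnp1 φn
    φnm1 hφnp1 hφn hmass hscheme ψa ψb hψa hψb
end

section
/- Fix an integer N ≥ 1 and a real number h > 0. Let v, ψ : ZMod N × ZMod N → ℝ be periodic grid functions with −Δ_h ψ (i,j) = v(i,j) for all (i,j). Then (h² Σ_{(i,j)} v(i,j)²)² ≤ (h² Σ_{(i,j)} [(D_x v(i,j))² + (D_y v(i,j))²]) · (h² Σ_{(i,j)} [(D_x ψ(i,j))² + (D_y ψ(i,j))²]); that is, ‖v‖₂² ≤ ‖∇_h v‖₂ · ‖v‖_{−1,h}. -/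
section SummationByParts

variable {G R : Type*} [AddGroup G] [Fintype G] [CommRing R]

theorem sum_sub_shift_mul_sub_shift (f g : G → R) (a : G) :
    ∑ p, (f (p + a) - f p) * (g (p + a) - g p)
      = ∑ p, f p * (2 * g p - g (p + a) - g (p - a)) := by
  have shift_both : ∑ p, f (p + a) * g (p + a) = ∑ p, f p * g p :=
    Equiv.sum_comp (Equiv.addRight a) fun p => f p * g p
  have shift_left : ∑ p, f (p + a) * g p = ∑ p, f p * g (p - a) := by
    simpa using Equiv.sum_comp (Equiv.addRight a) fun p => f p * g (p - a)
  have expand_lhs : ∀ p, (f (p + a) - f p) * (g (p + a) - g p)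
      = f (p + a) * g (p + a) - f (p + a) * g p - f p * g (p + a) + f p * g p := fun p => by ring
  have expand_rhs : ∀ p, f p * (2 * g p - g (p + a) - g (p - a))
      = 2 * (f p * g p) - f p * g (p + a) - f p * g (p - a) := fun p => by ring
  simp only [expand_lhs, expand_rhs, Finset.sum_add_distrib, Finset.sum_sub_distrib, shift_both,
    shift_left, ← Finset.mul_sum]
  ring

end SummationByParts

theorem sum_mul_add_mul_sq_le {ι : Type*} [Fintype ι] (a b c d : ι → ℝ) :
    (∑ i, (a i * b i + c i * d i)) ^ 2
      ≤ (∑ i, (a i ^ 2 + c i ^ 2)) * ∑ i, (b i ^ 2 + d i ^ 2) := by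
  simpa only [Fintype.sum_sum_type, Sum.elim_inl, Sum.elim_inr, ← Finset.sum_add_distrib] using
    Finset.sum_mul_sq_le_sq_mul_sq Finset.univ (Sum.elim a c) (Sum.elim b d)

section Grid

variable {N : ℕ} (h : ℝ) (ν : ZMod N × ZMod N → ℝ) (p : ZMod N × ZMod N)

theorem Dx_apply : Dx h ν p = (ν (p + (1, 0)) - ν p) / h := by
  simp [Dx, Prod.add_def]

theorem Dy_apply : Dy h ν p = (ν (p + (0, 1)) - ν p) / h := by
  simp [Dy, Prod.add_def]

theorem neg_lapH_apply : -lapH h ν p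
    = ((2 * ν p - ν (p + (1, 0)) - ν (p - (1, 0)))
      + (2 * ν p - ν (p + (0, 1)) - ν (p - (0, 1)))) / h ^ 2 := by
  simp only [lapH, Prod.add_def, Prod.sub_def, add_zero, sub_zero]
  ring

theorem sum_Dx_mul_Dx_add_Dy_mul_Dy [NeZero N] (v ψ : ZMod N × ZMod N → ℝ) :
    ∑ p, (Dx h v p * Dx h ψ p + Dy h v p * Dy h ψ p) = ∑ p, v p * -lapH h ψ p := by
  have lhs : ∀ p, Dx h v p * Dx h ψ p + Dy h v p * Dy h ψ p
      = ((v (p + (1, 0)) - v p) * (ψ (p + (1, 0)) - ψ p)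
        + (v (p + (0, 1)) - v p) * (ψ (p + (0, 1)) - ψ p)) / h ^ 2 := fun p => by
    rw [Dx_apply, Dx_apply, Dy_apply, Dy_apply]
    ring
  have rhs : ∀ p, v p * -lapH h ψ p
      = (v p * (2 * ψ p - ψ (p + (1, 0)) - ψ (p - (1, 0)))
        + v p * (2 * ψ p - ψ (p + (0, 1)) - ψ (p - (0, 1)))) / h ^ 2 := fun p => by
    rw [neg_lapH_apply]
    ring
  simp only [lhs, rhs, ← Finset.sum_div, Finset.sum_add_distrib, sum_sub_shift_mul_sub_shift]

end Grid

theorem discrete_interpolation_inequality_general (N : ℕ) [NeZero N]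
    (h : ℝ) (v ψ : ZMod N × ZMod N → ℝ)
    (hψ : ∀ p : ZMod N × ZMod N, -lapH h ψ p = v p) :
    (h ^ 2 * ∑ p : ZMod N × ZMod N, (v p) ^ 2) ^ 2
      ≤ (h ^ 2 * ∑ p : ZMod N × ZMod N, ((Dx h v p) ^ 2 + (Dy h v p) ^ 2))
        * (h ^ 2 * ∑ p : ZMod N × ZMod N, ((Dx h ψ p) ^ 2 + (Dy h ψ p) ^ 2)) := by
  have energy : ∑ p, v p ^ 2 = ∑ p, (Dx h v p * Dx h ψ p + Dy h v p * Dy h ψ p) := by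
    simp only [sum_Dx_mul_Dx_add_Dy_mul_Dy, hψ, sq]
  rw [energy, mul_pow, mul_mul_mul_comm, ← sq]
  exact mul_le_mul_of_nonneg_left (sum_mul_add_mul_sq_le _ _ _ _) (by positivity)

theorem discrete_interpolation_inequality (N : ℕ) [NeZero N] (hN : 1 ≤ N)
    (h : ℝ) (hh : 0 < h) (v ψ : ZMod N × ZMod N → ℝ)
    (hψ : ∀ p : ZMod N × ZMod N, -lapH h ψ p = v p) :
    (h ^ 2 * ∑ p : ZMod N × ZMod N, (v p) ^ 2) ^ 2
      ≤ (h ^ 2 * ∑ p : ZMod N × ZMod N, ((Dx h v p) ^ 2 + (Dy h v p) ^ 2))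
        * (h ^ 2 * ∑ p : ZMod N × ZMod N, ((Dx h ψ p) ^ 2 + (Dy h ψ p) ^ 2)) :=
  discrete_interpolation_inequality_general N h v ψ hψ
end
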